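/- Let p be a prime, Γ a multiplicative subgroup of F_p, and η₁, η₂ ∈ F_p nonzero. Then |Γ| · |{ (γ₁, γ₂, γ) ∈ Γ × Γ × Γ : 1 − η₁γ₁ = η₂γ·(1 − η₁γ₂) }| ≤ E⁺(Γ). -/

import Mathlib

/-!
Multiplying a solution `(γ₁, γ₂, γ)` by an arbitrary `γ₀ ∈ Γ` gives an injection of
`Γ × {solutions}` into the set of quadruples `(a, b, c, d) ∈ Γ⁴` with
`a - η₂ b = η₁ (c - η₂ d)`. Two applications of Cauchy–Schwarz to representation counts remove
first the dilation by `η₁` and then, after regrouping the quadruple as `a - c = η₂ (b - d)`, the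
dilation by `η₂`; what is left, `#{a - c = b - d}`, is the additive energy.
-/

open Pointwise

/-- `G` is (the underlying set of) a multiplicative subgroup of `F_p`, i.e. a subgroup of the
multiplicative group `F_p^* = F_p \ {0}`, regarded as a subset of `F_p`. -/
def IsMulSubgroup {p : ℕ} (G : Finset (ZMod p)) : Prop :=
  ∃ H : Subgroup (ZMod p)ˣ,
    (G : Set (ZMod p)) = (fun u : (ZMod p)ˣ => (u : ZMod p)) '' (H : Set (ZMod p)ˣ)

/-- The additive energy `E⁺(A)`: the number of quadruples `(a₁,a₂,a₃,a₄) ∈ A⁴`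
with `a₁ + a₂ = a₃ + a₄`. -/
def addEnergyPlus {p : ℕ} (A : Finset (ZMod p)) : ℕ :=
  (((A ×ˢ A) ×ˢ A ×ˢ A).filter fun t => t.1.1 + t.1.2 = t.2.1 + t.2.2).card

open Finset

section Collisions

variable {α β γ : Type*} [DecidableEq β]

lemma card_filter_apply_eq_apply_eq_sum {X : Finset α} {Y : Finset γ} {T : Finset β}
    (u : α → β) (v : γ → β) (hu : ∀ x ∈ X, u x ∈ T) :
    #{t ∈ X ×ˢ Y | u t.1 = v t.2} = ∑ s ∈ T, #{x ∈ X | u x = s} * #{y ∈ Y | v y = s} := by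
  rw [card_eq_sum_card_fiberwise (f := fun t : α × γ => u t.1) (t := T)
    fun t ht => hu _ (mem_product.1 (mem_filter.1 ht).1).1]
  refine sum_congr rfl fun s _ => ?_
  rw [← card_product, filter_filter]
  congr 1
  ext ⟨x, y⟩
  simp only [mem_filter, mem_product]
  grind

lemma card_filter_apply_eq_apply_sq_le (X : Finset α) (Y : Finset γ) (u : α → β) (v : γ → β) :
    #{t ∈ X ×ˢ Y | u t.1 = v t.2} ^ 2 ≤
      #{t ∈ X ×ˢ X | u t.1 = u t.2} * #{t ∈ Y ×ˢ Y | v t.1 = v t.2} := by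
  let T := X.image u ∪ Y.image v
  have hu : ∀ x ∈ X, u x ∈ T := fun x hx => mem_union_left _ (mem_image_of_mem u hx)
  have hv : ∀ y ∈ Y, v y ∈ T := fun y hy => mem_union_right _ (mem_image_of_mem v hy)
  rw [card_filter_apply_eq_apply_eq_sum u v hu, card_filter_apply_eq_apply_eq_sum u u hu,
    card_filter_apply_eq_apply_eq_sum v v hv]
  simpa only [sq] using sum_mul_sq_le_sq_mul_sq T (fun s => #{x ∈ X | u x = s})
    (fun s => #{y ∈ Y | v y = s})

lemma card_filter_apply_eq_comp_apply_le (X : Finset α) (u : α → β) {φ : β → β}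
    (hφ : φ.Injective) :
    #{t ∈ X ×ˢ X | u t.1 = φ (u t.2)} ≤ #{t ∈ X ×ˢ X | u t.1 = u t.2} := by
  have h := card_filter_apply_eq_apply_sq_le X X u (φ ∘ u)
  simp only [Function.comp_apply, hφ.eq_iff, ← sq] at h
  exact (Nat.pow_le_pow_iff_left two_ne_zero).1 h

end Collisions

lemma card_filter_prod_prod_comm {α β γ δ : Type*} (A : Finset α) (B : Finset β) (C : Finset γ)
    (D : Finset δ) (P : α → β → γ → δ → Prop) [∀ a b c d, Decidable (P a b c d)] :
    #{t ∈ (A ×ˢ B) ×ˢ C ×ˢ D | P t.1.1 t.1.2 t.2.1 t.2.2} =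
      #{t ∈ (A ×ˢ C) ×ˢ B ×ˢ D | P t.1.1 t.2.1 t.1.2 t.2.2} := by
  apply card_nbij' (fun t => ((t.1.1, t.2.1), (t.1.2, t.2.2)))
    (fun t => ((t.1.1, t.2.1), (t.1.2, t.2.2)))
  · rintro ⟨⟨a, b⟩, c, d⟩ ht
    simp_all
  · rintro ⟨⟨a, c⟩, b, d⟩ ht
    simp_all
  · exact fun _ _ => rfl
  · exact fun _ _ => rfl

lemma addEnergyPlus_eq_card_filter_sub_eq {p : ℕ} (A : Finset (ZMod p)) :
    addEnergyPlus A = #{t ∈ (A ×ˢ A) ×ˢ A ×ˢ A | t.1.1 - t.1.2 = t.2.1 - t.2.2} := by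
  apply card_nbij' (fun t => ((t.1.1, t.2.2), (t.2.1, t.1.2)))
    (fun t => ((t.1.1, t.2.2), (t.2.1, t.1.2)))
  · rintro ⟨⟨a, b⟩, c, d⟩ ht
    simp only [coe_filter, mem_product, Set.mem_ofPred_eq] at ht ⊢
    exact ⟨by tauto, by linear_combination ht.2⟩
  · rintro ⟨⟨a, b⟩, c, d⟩ ht
    simp only [coe_filter, mem_product, Set.mem_ofPred_eq] at ht ⊢
    exact ⟨by tauto, by linear_combination ht.2⟩
  · exact fun _ _ => rfl
  · exact fun _ _ => rfl

namespace IsMulSubgroup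

variable {p : ℕ} {G : Finset (ZMod p)}

lemma zero_notMem [Nontrivial (ZMod p)] (hG : IsMulSubgroup G) : (0 : ZMod p) ∉ G := by
  obtain ⟨H, hH⟩ := hG
  intro h0
  obtain ⟨u, -, hu⟩ : (0 : ZMod p) ∈ (fun u : (ZMod p)ˣ => (u : ZMod p)) '' H := hH ▸ h0
  exact u.ne_zero hu

lemma mul_mem (hG : IsMulSubgroup G) {x y : ZMod p} (hx : x ∈ G) (hy : y ∈ G) : x * y ∈ G := by
  obtain ⟨H, hH⟩ := hG
  obtain ⟨u, hu, rfl⟩ : x ∈ (fun u : (ZMod p)ˣ => (u : ZMod p)) '' H := hH ▸ hx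
  obtain ⟨v, hv, rfl⟩ : y ∈ (fun u : (ZMod p)ˣ => (u : ZMod p)) '' H := hH ▸ hy
  have : ((u * v : (ZMod p)ˣ) : ZMod p) ∈ (G : Set (ZMod p)) :=
    hH ▸ ⟨u * v, H.mul_mem hu hv, rfl⟩
  simpa using this

end IsMulSubgroup

lemma card_mul_card_filter_le_card_filter_sub_mul {K : Type*} [CommRing K] [IsDomain K]
    [DecidableEq K] {G : Finset K} (hG0 : (0 : K) ∉ G) (hGmul : ∀ x ∈ G, ∀ y ∈ G, x * y ∈ G)
    (η₁ η₂ : K) :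
    #G * #{t ∈ G ×ˢ G ×ˢ G | 1 - η₁ * t.1 = η₂ * t.2.2 * (1 - η₁ * t.2.1)} ≤
      #{t ∈ (G ×ˢ G) ×ˢ G ×ˢ G | t.1.1 - η₂ * t.1.2 = η₁ * (t.2.1 - η₂ * t.2.2)} := by
  have hne : ∀ x ∈ G, x ≠ 0 := fun x hx h => hG0 (h ▸ hx)
  rw [← card_product]
  apply card_le_card_of_injOn fun q =>
    ((q.1, q.2.2.2 * q.1), (q.2.1 * q.1, q.2.2.2 * q.2.2.1 * q.1))
  · rintro ⟨γ₀, γ₁, γ₂, γ⟩ hq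
    simp only [coe_product, coe_filter, Set.mem_prod, mem_coe, mem_product,
      Set.mem_ofPred_eq] at hq ⊢
    obtain ⟨hγ₀, ⟨hγ₁, hγ₂, hγ⟩, heq⟩ := hq
    refine ⟨⟨⟨hγ₀, hGmul _ hγ _ hγ₀⟩, hGmul _ hγ₁ _ hγ₀, hGmul _ (hGmul _ hγ _ hγ₂) _ hγ₀⟩, ?_⟩
    linear_combination γ₀ * heq
  · rintro ⟨γ₀, γ₁, γ₂, γ⟩ hq ⟨δ₀, δ₁, δ₂, δ⟩ - heq
    simp only [coe_product, coe_filter, Set.mem_prod, mem_coe, mem_product,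
      Set.mem_ofPred_eq] at hq
    obtain ⟨hγ₀, ⟨-, -, hγ⟩, -⟩ := hq
    simp only [Prod.mk.injEq] at heq
    obtain ⟨⟨rfl, e⟩, e₁, e₂⟩ := heq
    have hγδ : γ = δ := mul_right_cancel₀ (hne _ hγ₀) e
    subst hγδ
    have hγ₂δ₂ : γ₂ = δ₂ :=
      mul_left_cancel₀ (hne _ hγ) (mul_right_cancel₀ (hne _ hγ₀) e₂)
    rw [mul_right_cancel₀ (hne _ hγ₀) e₁, hγ₂δ₂]

/-- For a prime `p`, a multiplicative subgroup `Γ ⊆ F_p` and nonzero `η₁, η₂ ∈ F_p` one has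
`|Γ| · |{(γ₁,γ₂,γ) ∈ Γ³ : 1 - η₁γ₁ = η₂γ(1 - η₁γ₂)}| ≤ E⁺(Γ)`. -/
theorem statement14 :
    ∀ (p : ℕ), p.Prime → ∀ G : Finset (ZMod p), IsMulSubgroup G →
      ∀ η₁ η₂ : ZMod p, η₁ ≠ 0 → η₂ ≠ 0 →
      G.card * ((G ×ˢ G ×ˢ G).filter fun t =>
          1 - η₁ * t.1 = η₂ * t.2.2 * (1 - η₁ * t.2.1)).card ≤ addEnergyPlus G := by
  intro p hp G hG η₁ η₂ hη₁ hη₂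
  have : Fact p.Prime := ⟨hp⟩
  calc
    _ ≤ #{t ∈ (G ×ˢ G) ×ˢ G ×ˢ G | t.1.1 - η₂ * t.1.2 = η₁ * (t.2.1 - η₂ * t.2.2)} :=
      card_mul_card_filter_le_card_filter_sub_mul hG.zero_notMem
        (fun _ hx _ hy => hG.mul_mem hx hy) η₁ η₂
    _ ≤ #{t ∈ (G ×ˢ G) ×ˢ G ×ˢ G | t.1.1 - η₂ * t.1.2 = t.2.1 - η₂ * t.2.2} :=
      card_filter_apply_eq_comp_apply_le (G ×ˢ G) (fun x => x.1 - η₂ * x.2)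
        (mul_right_injective₀ hη₁)
    _ = #{t ∈ (G ×ˢ G) ×ˢ G ×ˢ G | t.1.1 - t.1.2 = η₂ * (t.2.1 - t.2.2)} := by
      rw [card_filter_prod_prod_comm G G G G fun a b c d => a - η₂ * b = c - η₂ * d]
      congr 1
      refine filter_congr fun t _ => ?_
      constructor <;> intro h <;> linear_combination h
    _ ≤ #{t ∈ (G ×ˢ G) ×ˢ G ×ˢ G | t.1.1 - t.1.2 = t.2.1 - t.2.2} :=
      card_filter_apply_eq_comp_apply_le (G ×ˢ G) (fun x => x.1 - x.2)
        (mul_right_injective₀ hη₂)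
    _ = addEnergyPlus G := (addEnergyPlus_eq_card_filter_sub_eq G).symm
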